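/- Suppose z ∈ ℝ^n has noiseless measurements at a sample set M that includes the boundary entries z_1 and z_n, and between any two consecutive samples the second-order differences of z do not change sign (2D sign consistency). If in addition the sign of Dz within each inter-sample segment is constant (+1 or -1), then taking u equal to the all-ones (respectively all-minus-ones) vector on each such segment satisfies (D^T)_{M^c} u = 0, u_I = sign(Dz)_I, and ‖u‖_∞ ≤ 1, certifying optimality of z for min ‖Dz‖₁ s.t. Az = y. -/

import Mathlib

/-! Column `j` of `D` has entries `1, -2, 1` in rows `j - 2, j - 1, j`. When `j` is unsampled these
rows lie in one segment, since a twin pair `m, m + 1` separating them would contain `j`; so `u` is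
constant on them and `(Dᵀ u)_j = 0`. As `u` agrees with `sign (D z)` on its support and
`‖u‖_∞ ≤ 1`, every feasible `w` then satisfies
`‖D z‖₁ = ⟪u, D z⟫ = ⟪Dᵀ u, z⟫ = ⟪Dᵀ u, w⟫ = ⟪u, D w⟫ ≤ ‖D w‖₁`. -/

open Matrix

/-- The (n-2)×n second-order difference operator: (Dz)_i = z_i - 2 z_{i+1} + z_{i+2}. -/
def Dmat (n : ℕ) : Matrix (Fin (n - 2)) (Fin n) ℝ :=
  fun i j =>
    if (j : ℕ) = (i : ℕ) then 1
    else if (j : ℕ) = (i : ℕ) + 1 then -2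
    else if (j : ℕ) = (i : ℕ) + 2 then 1
    else 0

lemma mul_eq_abs_of_eq_sign {u x : ℝ} (h : x ≠ 0 → u = Real.sign x) : u * x = |x| := by
  rcases lt_trichotomy x 0 with hx | rfl | hx
  · rw [h hx.ne, Real.sign_of_neg hx, abs_of_neg hx, neg_one_mul]
  · simp
  · rw [h hx.ne', Real.sign_of_pos hx, abs_of_pos hx, one_mul]

theorem sum_abs_mulVec_le_of_dual_certificate {ι κ : Type*} [Fintype ι] [Fintype κ]
    (D : Matrix ι κ ℝ) (M : Set κ) {u : ι → ℝ} {z w : κ → ℝ}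
    (hker : ∀ j ∉ M, (Dᵀ *ᵥ u) j = 0) (hu : ∀ i, |u i| ≤ 1)
    (hsign : ∀ i, u i * (D *ᵥ z) i = |(D *ᵥ z) i|) (hzw : ∀ j ∈ M, z j = w j) :
    ∑ i, |(D *ᵥ z) i| ≤ ∑ i, |(D *ᵥ w) i| := by
  have hpair : u ⬝ᵥ (D *ᵥ z) = u ⬝ᵥ (D *ᵥ w) := by
    rw [dotProduct_mulVec, dotProduct_mulVec, ← mulVec_transpose]
    simp only [dotProduct]
    refine Finset.sum_congr rfl fun j _ => ?_
    by_cases hj : j ∈ M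
    · rw [hzw j hj]
    · rw [hker j hj, zero_mul, zero_mul]
  calc ∑ i, |(D *ᵥ z) i| = u ⬝ᵥ (D *ᵥ z) := (Finset.sum_congr rfl fun i _ => hsign i).symm
    _ = u ⬝ᵥ (D *ᵥ w) := hpair
    _ ≤ ∑ i, |(D *ᵥ w) i| := Finset.sum_le_sum fun i _ =>
        calc u i * (D *ᵥ w) i ≤ |u i| * |(D *ᵥ w) i| := (le_abs_self _).trans (abs_mul _ _).le
          _ ≤ |(D *ᵥ w) i| := mul_le_of_le_one_left (abs_nonneg _) (hu i)

lemma Dmat_transpose_mulVec_apply {n k : ℕ} (hk : k + 2 < n - 2) (u : Fin (n - 2) → ℝ) :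
    ((Dmat n)ᵀ *ᵥ u) ⟨k + 2, by omega⟩ =
      u ⟨k, by omega⟩ - 2 * u ⟨k + 1, by omega⟩ + u ⟨k + 2, hk⟩ := by
  have hterm : ∀ i : Fin (n - 2), Dmat n i ⟨k + 2, by omega⟩ * u i =
      (if i = ⟨k, by omega⟩ then u i else 0) + (if i = ⟨k + 1, by omega⟩ then -2 * u i else 0) +
        (if i = ⟨k + 2, hk⟩ then u i else 0) := by
    intro i
    simp only [Dmat, Fin.ext_iff]
    split_ifs <;> first | (exfalso; omega) | ring
  simp only [mulVec, dotProduct, transpose_apply, hterm, Finset.sum_add_distrib,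
    Finset.sum_ite_eq', Finset.mem_univ, if_true]
  ring

section Sampling

variable {n : ℕ}

def IsTwinSampled (M : Finset (Fin n)) : Prop :=
  ∀ k ∈ M, (∃ h : (k : ℕ) + 1 < n, (⟨(k : ℕ) + 1, h⟩ : Fin n) ∈ M) ∨
    (1 ≤ (k : ℕ) ∧ (⟨(k : ℕ) - 1, Nat.sub_lt_of_lt k.isLt⟩ : Fin n) ∈ M)

def IsTwinPair (M : Finset (Fin n)) (m : ℕ) : Prop :=
  (∃ hm : m < n, (⟨m, hm⟩ : Fin n) ∈ M) ∧ (∃ hm1 : m + 1 < n, (⟨m + 1, hm1⟩ : Fin n) ∈ M)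

/-- Row `i` of `D` involves `z_i, z_{i+1}, z_{i+2}`, so rows `i ≤ j` lie in one segment when no
twin pair `m, m + 1` has `i < m ≤ j`. -/
def IsSegmentConstant (M : Finset (Fin n)) (u : Fin (n - 2) → ℝ) : Prop :=
  ∀ i j : Fin (n - 2), (i : ℕ) ≤ (j : ℕ) →
    (¬ ∃ m : ℕ, (i : ℕ) < m ∧ m + 1 ≤ (j : ℕ) + 1 ∧ IsTwinPair M m) → u i = u j

variable {M : Finset (Fin n)}

lemma exists_eq_add_two_of_not_mem (hn : 3 ≤ n) (hb0 : (⟨0, Nat.zero_lt_of_lt hn⟩ : Fin n) ∈ M)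
    (hbn : (⟨n - 1, Nat.sub_one_lt_of_lt hn⟩ : Fin n) ∈ M) (htwin : IsTwinSampled M)
    {j : Fin n} (hj : j ∉ M) :
    ∃ k, ∃ hk : k + 2 < n - 2, j = ⟨k + 2, by omega⟩ := by
  have h1 : (⟨1, by omega⟩ : Fin n) ∈ M := by
    rcases htwin _ hb0 with ⟨_, h⟩ | ⟨h, _⟩
    · exact h
    · simp at h
  have h2 : (⟨n - 2, by omega⟩ : Fin n) ∈ M := by
    rcases htwin _ hbn with ⟨h, _⟩ | ⟨_, h⟩
    · simp only at h; omega
    · simpa only [Nat.sub_sub] using h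
  have hne : ∀ v (hv : v < n), (⟨v, hv⟩ : Fin n) ∈ M → (j : ℕ) ≠ v :=
    fun v hv hvM hjv => hj (by rwa [show j = ⟨v, hv⟩ from Fin.ext hjv])
  have h0j := hne _ _ hb0
  have h1j := hne _ _ h1
  have h2j := hne _ _ h2
  have hnj := hne _ _ hbn
  exact ⟨j - 2, by omega, Fin.ext (by simp only; omega)⟩

lemma eq_of_not_mem_of_isSegmentConstant {u : Fin (n - 2) → ℝ} (huseg : IsSegmentConstant M u)
    {k : ℕ} (hk : k + 2 < n - 2) (hj : (⟨k + 2, by omega⟩ : Fin n) ∉ M) :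
    u ⟨k, by omega⟩ = u ⟨k + 1, by omega⟩ ∧ u ⟨k, by omega⟩ = u ⟨k + 2, hk⟩ := by
  have hno_twin : ∀ J : ℕ, J ≤ k + 2 → ¬ ∃ m : ℕ, k < m ∧ m + 1 ≤ J + 1 ∧ IsTwinPair M m := by
    rintro J hJ ⟨m, hkm, hmJ, ⟨hm, hmM⟩, ⟨hm1, hm1M⟩⟩
    obtain rfl | rfl : m = k + 1 ∨ m = k + 2 := by omega
    exacts [hj hm1M, hj hmM]
  exact ⟨huseg _ _ (by simp) (hno_twin _ (by simp)), huseg _ _ (by simp) (hno_twin _ le_rfl)⟩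

theorem Dmat_transpose_mulVec_eq_zero_of_not_mem (hn : 3 ≤ n)
    (hb0 : (⟨0, Nat.zero_lt_of_lt hn⟩ : Fin n) ∈ M)
    (hbn : (⟨n - 1, Nat.sub_one_lt_of_lt hn⟩ : Fin n) ∈ M)
    (htwin : IsTwinSampled M) {u : Fin (n - 2) → ℝ} (huseg : IsSegmentConstant M u)
    {j : Fin n} (hj : j ∉ M) : ((Dmat n)ᵀ *ᵥ u) j = 0 := by
  obtain ⟨k, hk, rfl⟩ := exists_eq_add_two_of_not_mem hn hb0 hbn htwin hj
  obtain ⟨h1, h2⟩ := eq_of_not_mem_of_isSegmentConstant huseg hk hj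
  rw [Dmat_transpose_mulVec_apply hk, ← h1, ← h2]
  ring

end Sampling

/-- Certificate of optimality for a sign-consistent profile with constant segment signs:
    if the sample set M consists of twin samples and contains the boundary, and u is a
    ±1-valued vector, constant on each segment between consecutive twin samples, which
    matches sign(Dz) on the support of Dz, then u satisfies (Dᵀ)_{Mᶜ} u = 0 and
    ‖u‖_∞ ≤ 1, certifying that z minimizes ‖Dz‖₁ subject to z_M = y_M. -/
theorem stmt13 (n : ℕ) (hn : 3 ≤ n) (z : Fin n → ℝ) (M : Finset (Fin n)) (y : Fin n → ℝ)
    (hfeas : ∀ i ∈ M, z i = y i)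
    (hb0 : (⟨0, by omega⟩ : Fin n) ∈ M) (hbn : (⟨n - 1, by omega⟩ : Fin n) ∈ M)
    (htwin : ∀ k ∈ M, (∃ h : (k : ℕ) + 1 < n, (⟨(k : ℕ) + 1, h⟩ : Fin n) ∈ M) ∨
      (1 ≤ (k : ℕ) ∧ (⟨(k : ℕ) - 1, by have := k.isLt; omega⟩ : Fin n) ∈ M))
    (u : Fin (n - 2) → ℝ)
    (hu1 : ∀ i, u i = 1 ∨ u i = -1)
    (huseg : ∀ i j : Fin (n - 2), (i : ℕ) ≤ (j : ℕ) →
      (¬ ∃ m : ℕ, (i : ℕ) < m ∧ m + 1 ≤ (j : ℕ) + 1 ∧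
        (∃ hm : m < n, (⟨m, hm⟩ : Fin n) ∈ M) ∧
        (∃ hm1 : m + 1 < n, (⟨m + 1, hm1⟩ : Fin n) ∈ M)) →
      u i = u j)
    (husign : ∀ i, (Dmat n).mulVec z i ≠ 0 → u i = Real.sign ((Dmat n).mulVec z i)) :
    (∀ j : Fin n, j ∉ M → (Dmat n)ᵀ.mulVec u j = 0) ∧
    (∀ i, |u i| ≤ 1) ∧
    (∀ w : Fin n → ℝ, (∀ i ∈ M, w i = y i) →
      ∑ i, |(Dmat n).mulVec z i| ≤ ∑ i, |(Dmat n).mulVec w i|) := by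
  have hker : ∀ j ∉ M, ((Dmat n)ᵀ *ᵥ u) j = 0 := fun j hj =>
    Dmat_transpose_mulVec_eq_zero_of_not_mem hn hb0 hbn htwin huseg hj
  have hu : ∀ i, |u i| ≤ 1 := fun i => by rcases hu1 i with h | h <;> simp [h]
  exact ⟨hker, hu, fun w hw => sum_abs_mulVec_le_of_dual_certificate (Dmat n) M hker hu
    (fun i => mul_eq_abs_of_eq_sign (husign i)) fun j hj => (hfeas j hj).trans (hw j hj).symm⟩
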